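/- arXiv:1805.02573 — 5 statements merged into one kernel-verified Lean document; each statement's English description precedes it below -/
import Mathlib

section
/- Let f : N × N → M be a full non-degenerate Λ-bilinear map between Λ-modules. If Δ is a subring of End_Λ(N) acting on N such that f(αx, y) = f(x, αy) = α·f(x,y) for all α ∈ Δ and x,y ∈ N (where the action of α on M is well-defined via fullness), then every element of Δ commutes with every element of Sym(f); that is, Δ ⊆ Z(Sym(f)). -/
/-- If `Δ` is a subring of `End_Λ(N)` acting compatibly on `M`
(via `g`) with `f(αx,y) = f(x,αy) = α·f(x,y)`, then every element of `Δ`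
lies in `Sym f` and commutes with every element of `Sym f`,
i.e. `Δ ⊆ Z(Sym f)`. -/
theorem stmt1 {Λ N M : Type*} [CommRing Λ] [AddCommGroup N] [Module Λ N]
    [AddCommGroup M] [Module Λ M]
    (f : N →ₗ[Λ] N →ₗ[Λ] M)
    (hfull : Submodule.span Λ {z : M | ∃ x y : N, f x y = z} = ⊤)
    (hndl : ∀ a : N, (∀ x : N, f a x = 0) → a = 0)
    (hndr : ∀ a : N, (∀ x : N, f x a = 0) → a = 0)
    (Δ : Subring (Module.End Λ N))
    (g : Module.End Λ N → Module.End Λ M)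
    (hact : ∀ α ∈ Δ, ∀ x y : N,
      f (α x) y = f x (α y) ∧ f (α x) y = g α (f x y)) :
    ∀ α ∈ Δ, (∀ x y : N, f (α x) y = f x (α y)) ∧
      ∀ β : Module.End Λ N, (∀ x y : N, f (β x) y = f x (β y)) → α * β = β * α := by
  intro α hα
  refine ⟨fun x y => (hact α hα x y).1, fun β hβ => ?_⟩
  apply LinearMap.ext
  intro x
  have key : ∀ y : N, f ((α * β) x) y = f ((β * α) x) y := by
    intro y
    have h1 : f (α (β x)) y = g α (f (β x) y) := (hact α hα (β x) y).2
    have h2 : f (β x) y = f x (β y) := hβ x y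
    have h3 : g α (f x (β y)) = f (α x) (β y) := ((hact α hα x (β y)).2).symm
    have h4 : f (α x) (β y) = f (β (α x)) y := (hβ (α x) y).symm
    calc f ((α * β) x) y = f (α (β x)) y := rfl
      _ = g α (f (β x) y) := h1
      _ = g α (f x (β y)) := by rw [h2]
      _ = f (α x) (β y) := h3
      _ = f (β (α x)) y := h4
      _ = f ((β * α) x) y := rfl
  have : (α * β) x - (β * α) x = 0 := by
    apply hndl
    intro y
    rw [map_sub, LinearMap.sub_apply, key y, sub_self]
  exact sub_eq_zero.mp this
end

section
/- Let f : N × N → M be a full non-degenerate Λ-bilinear map between Λ-modules. Then there exists a largest ring of scalars R(f) of f: a commutative subring of End_Λ(N) acting compatibly and faithfully on N and M with f(αx,y)=f(x,αy)=αf(x,y), which contains every other such ring of scalars. -/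
/-- A ring of scalars of a Λ-bilinear map `f : N × N → M`: a commutative
subring `Δ` of `End_Λ(N)` together with a faithful (injective) compatible
ring action `g` on `M` satisfying `f(αx,y) = f(x,αy) = α·f(x,y)`. -/
def IsRingOfScalars {Λ N M : Type*} [CommRing Λ] [AddCommGroup N] [Module Λ N]
    [AddCommGroup M] [Module Λ M] (f : N →ₗ[Λ] N →ₗ[Λ] M)
    (Δ : Subring (Module.End Λ N)) : Prop :=
  (∀ α β : Δ, α * β = β * α) ∧
  ∃ g : Δ →+* Module.End Λ M, Function.Injective g ∧
    ∀ (α : Δ) (x y : N),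
      f ((α : Module.End Λ N) x) y = f x ((α : Module.End Λ N) y) ∧
      f ((α : Module.End Λ N) x) y = g α (f x y)


section Aux

variable {Λ N M : Type*} [CommRing Λ] [AddCommGroup N] [Module Λ N]
    [AddCommGroup M] [Module Λ M] (f : N →ₗ[Λ] N →ₗ[Λ] M)

/-- Key computation: if `a` and `b` are symmetric with companions `ha`, `hb`. -/
private theorem scalar_key {a b : Module.End Λ N} {ha hb : Module.End Λ M}
    (hha : ∀ x y : N, f (a x) y = f x (a y) ∧ f (a x) y = ha (f x y))
    (hhb : ∀ x y : N, f (b x) y = f x (b y) ∧ f (b x) y = hb (f x y))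
    (x y : N) :
    f (a (b x)) y = hb (ha (f x y)) ∧ f x (a (b y)) = hb (ha (f x y)) := by
  constructor
  · calc f (a (b x)) y = f (b x) (a y) := (hha (b x) y).1
      _ = hb (f x (a y)) := (hhb x (a y)).2
      _ = hb (f (a x) y) := by rw [(hha x y).1]
      _ = hb (ha (f x y)) := by rw [(hha x y).2]
  · calc f x (a (b y)) = f (a x) (b y) := ((hha x (b y)).1).symm
      _ = f (b (a x)) y := ((hhb (a x) y).1).symm
      _ = hb (f (a x) y) := (hhb (a x) y).2
      _ = hb (ha (f x y)) := by rw [(hha x y).2]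

/-- The largest ring of scalars of `f`, as a subring of `End_Λ(N)`. -/
private def scalarRing : Subring (Module.End Λ N) where
  carrier := {α | ∃ h : Module.End Λ M, ∀ x y : N,
      f (α x) y = f x (α y) ∧ f (α x) y = h (f x y)}
  one_mem' := ⟨1, fun _ _ => ⟨rfl, rfl⟩⟩
  mul_mem' := by
    rintro a b ⟨ha, hha⟩ ⟨hb, hhb⟩
    refine ⟨hb * ha, fun x y => ?_⟩
    have k := scalar_key f hha hhb x y
    exact ⟨k.1.trans k.2.symm, k.1⟩
  add_mem' := by
    rintro a b ⟨ha, hha⟩ ⟨hb, hhb⟩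
    refine ⟨ha + hb, fun x y => ?_⟩
    constructor
    · simp only [LinearMap.add_apply, map_add]
      rw [(hha x y).1, (hhb x y).1]
    · simp only [LinearMap.add_apply, map_add]
      rw [(hha x y).2, (hhb x y).2]
  neg_mem' := by
    rintro a ⟨ha, hha⟩
    refine ⟨-ha, fun x y => ?_⟩
    constructor
    · simp only [LinearMap.neg_apply, map_neg]
      rw [(hha x y).1]
    · simp only [LinearMap.neg_apply, map_neg]
      rw [(hha x y).2]
  zero_mem' := ⟨0, fun x y => by simp⟩

private theorem mem_scalarRing {a : Module.End Λ N} :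
    a ∈ scalarRing f ↔ ∃ h : Module.End Λ M, ∀ x y : N,
      f (a x) y = f x (a y) ∧ f (a x) y = h (f x y) := Iff.rfl

end Aux

/-- a full non-degenerate Λ-bilinear map has a largest ring of
scalars, containing every other ring of scalars as a subring of `End_Λ(N)`. -/
theorem stmt2 {Λ N M : Type*} [CommRing Λ] [AddCommGroup N] [Module Λ N]
    [AddCommGroup M] [Module Λ M]
    (f : N →ₗ[Λ] N →ₗ[Λ] M)
    (hfull : Submodule.span Λ {z : M | ∃ x y : N, f x y = z} = ⊤)
    (hndl : ∀ a : N, (∀ x : N, f a x = 0) → a = 0)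
    (hndr : ∀ a : N, (∀ x : N, f x a = 0) → a = 0) :
    ∃ R : Subring (Module.End Λ N), IsRingOfScalars f R ∧
      ∀ Δ : Subring (Module.End Λ N), IsRingOfScalars f Δ → Δ ≤ R := by
  classical
  -- extension lemma: Λ-endomorphisms of M agreeing on the image of f agree
  have hext : ∀ h h' : Module.End Λ M, (∀ x y : N, h (f x y) = h' (f x y)) → h = h' := by
    intro h h' hh
    refine LinearMap.ext_on hfull ?_
    rintro z ⟨x, y, rfl⟩
    exact hh x y
  -- a nondegeneracy consequence: equal pairings in first slot force equality
  have hndl' : ∀ a b : N, (∀ y : N, f a y = f b y) → a = b := by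
    intro a b hab
    have h0 : a - b = 0 := hndl _ (fun y => by
      rw [map_sub, LinearMap.sub_apply, hab, sub_self])
    exact sub_eq_zero.mp h0
  set R : Subring (Module.End Λ N) := scalarRing f with hR
  -- the induced action on M
  have hRmem : ∀ α : R, ∃ h : Module.End Λ M, ∀ x y : N,
      f ((α : Module.End Λ N) x) y = f x ((α : Module.End Λ N) y) ∧
      f ((α : Module.End Λ N) x) y = h (f x y) :=
    fun α => (mem_scalarRing f).mp α.2
  let g0 : R → Module.End Λ M := fun α => Classical.choose (hRmem α)
  have gspec : ∀ (α : R) (x y : N),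
      f ((α : Module.End Λ N) x) y = f x ((α : Module.End Λ N) y) ∧
      f ((α : Module.End Λ N) x) y = g0 α (f x y) :=
    fun α => Classical.choose_spec (hRmem α)
  -- commutativity of R
  have hcomm : ∀ α β : R, α * β = β * α := by
    intro α β
    ext1
    apply LinearMap.ext
    intro x
    apply hndl'
    intro y
    have k1 := scalar_key f (gspec α) (gspec β) x y
    have k2 := scalar_key f (gspec β) (gspec α) x y
    have d1 : f ((α : Module.End Λ N) ((β : Module.End Λ N) x)) y
        = g0 α (g0 β (f x y)) := by
      rw [(gspec α _ y).2, (gspec β x y).2]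
    have d2 : f ((β : Module.End Λ N) ((α : Module.End Λ N) x)) y
        = g0 β (g0 α (f x y)) := by
      rw [(gspec β _ y).2, (gspec α x y).2]
    calc f (((α * β : R) : Module.End Λ N) x) y
        = g0 β (g0 α (f x y)) := k1.1
      _ = f (((β * α : R) : Module.End Λ N) x) y := by rw [← d2]; rfl
  -- g0 as a ring homomorphism
  have gadd : ∀ α β : R, g0 (α + β) = g0 α + g0 β := by
    intro α β
    apply hext
    intro x y
    rw [← (gspec (α + β) x y).2]
    have : (((α + β : R) : Module.End Λ N)) x
        = (α : Module.End Λ N) x + (β : Module.End Λ N) x := rfl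
    rw [this, map_add, LinearMap.add_apply, LinearMap.add_apply,
      (gspec α x y).2, (gspec β x y).2]
  have gmul : ∀ α β : R, g0 (α * β) = g0 α * g0 β := by
    intro α β
    apply hext
    intro x y
    rw [← (gspec (α * β) x y).2]
    have : (((α * β : R) : Module.End Λ N)) x
        = (α : Module.End Λ N) ((β : Module.End Λ N) x) := rfl
    rw [this, (gspec α _ y).2, (gspec β x y).2]
    rfl
  have gone : g0 1 = 1 := by
    apply hext
    intro x y
    rw [← (gspec 1 x y).2]
    rfl
  have gzero : g0 0 = 0 := by
    apply hext
    intro x y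
    rw [← (gspec 0 x y).2]
    simp
  let g : R →+* Module.End Λ M :=
    { toFun := g0
      map_one' := gone
      map_mul' := gmul
      map_zero' := gzero
      map_add' := gadd }
  have ginj : Function.Injective g := by
    intro α β hab
    have : ∀ x y : N, f ((α : Module.End Λ N) x) y = f ((β : Module.End Λ N) x) y := by
      intro x y
      rw [(gspec α x y).2, (gspec β x y).2]
      show g α (f x y) = g β (f x y)
      rw [hab]
    apply Subtype.ext
    apply LinearMap.ext
    intro x
    exact hndl' _ _ (fun y => this x y)
  refine ⟨R, ⟨hcomm, g, ginj, fun α x y => gspec α x y⟩, ?_⟩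
  rintro Δ ⟨-, gΔ, -, hgΔ⟩ a ha
  exact ⟨gΔ ⟨a, ha⟩, fun x y => hgΔ ⟨a, ha⟩ x y⟩
end

section
/- Let f : N × N → M be a non-degenerate Λ-bilinear map and let a_1, …, a_n generate N as a Λ-module. If α ∈ Sym(f) satisfies f(α a_i, β a_j) = f(β a_i, α a_j) for all 1 ≤ i, j ≤ n and all β in a generating set of Sym(f) as a Λ-module, then α ∈ Z(Sym(f)). -/
/-- let `f` be non-degenerate, `a_1,…,a_n` generate `N`, and `B`
be a Λ-module generating set of `Sym f`. If `α ∈ Sym f` satisfies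
`f(α a_i, β a_j) = f(β a_i, α a_j)` for all `i, j` and all `β ∈ B`, then `α`
commutes with every element of `Sym f`, i.e. `α ∈ Z(Sym f)`. -/
theorem stmt4 {Λ N M : Type*} [CommRing Λ] [AddCommGroup N] [Module Λ N]
    [AddCommGroup M] [Module Λ M]
    (f : N →ₗ[Λ] N →ₗ[Λ] M)
    (hndl : ∀ a : N, (∀ x : N, f a x = 0) → a = 0)
    (hndr : ∀ a : N, (∀ x : N, f x a = 0) → a = 0)
    {n : ℕ} (a : Fin n → N) (ha : Submodule.span Λ (Set.range a) = ⊤)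
    (Sym : Submodule Λ (Module.End Λ N))
    (hSym : ∀ α : Module.End Λ N, α ∈ Sym ↔ ∀ x y : N, f (α x) y = f x (α y))
    (B : Set (Module.End Λ N)) (hB : Submodule.span Λ B = Sym)
    (α : Module.End Λ N) (hα : α ∈ Sym)
    (h : ∀ β ∈ B, ∀ i j : Fin n, f (α (a i)) (β (a j)) = f (β (a i)) (α (a j))) :
    ∀ β ∈ Sym, α * β = β * α := by
  -- Step 1: for β ∈ B, f (α x) (β y) = f (β x) (α y) for all x y.
  have hB' : ∀ β ∈ B, f.compl₁₂ α β = f.compl₁₂ β α := by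
    intro β hβ
    apply LinearMap.ext_on_range ha
    intro i
    apply LinearMap.ext_on_range ha
    intro j
    simpa using h β hβ i j
  -- Step 2: extend to all β ∈ Sym by linearity.
  have key : ∀ β ∈ Sym, f.compl₁₂ α β = f.compl₁₂ β α := by
    let S : Submodule Λ (Module.End Λ N) :=
      { carrier := {β | f.compl₁₂ α β = f.compl₁₂ β α}
        add_mem' := by
          intro p q hp hq
          simp only [Set.mem_setOf_eq] at hp hq ⊢
          have hp' : ∀ x y : N, f (α x) (p y) = f (p x) (α y) :=
            fun x y => LinearMap.ext_iff₂.mp hp x y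
          have hq' : ∀ x y : N, f (α x) (q y) = f (q x) (α y) :=
            fun x y => LinearMap.ext_iff₂.mp hq x y
          ext x y
          simp [LinearMap.compl₁₂_apply, hp', hq']
        zero_mem' := by
          ext x y
          simp [LinearMap.compl₁₂_apply]
        smul_mem' := by
          intro c p hp
          simp only [Set.mem_setOf_eq] at hp ⊢
          have hp' : ∀ x y : N, f (α x) (p y) = f (p x) (α y) :=
            fun x y => LinearMap.ext_iff₂.mp hp x y
          ext x y
          simp [LinearMap.compl₁₂_apply, hp'] }
    have hle : Sym ≤ S := by
      rw [← hB]
      exact Submodule.span_le.mpr hB'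
    exact fun β hβ => hle hβ
  -- Step 3: conclude commutation using non-degeneracy.
  intro β hβ
  have hαf := (hSym α).mp hα
  have hβf := (hSym β).mp hβ
  have hz : ∀ x : N, α (β x) - β (α x) = 0 := by
    intro x
    apply hndl
    intro y
    have h1 : f (α (β x)) y = f (β x) (α y) := hαf (β x) y
    have h2 : f (β (α x)) y = f (α x) (β y) := hβf (α x) y
    have h3 : f (α x) (β y) = f (β x) (α y) :=
      LinearMap.ext_iff₂.mp (key β hβ) x y
    rw [map_sub, LinearMap.sub_apply, h1, h2, h3, sub_self]
  ext x
  exact sub_eq_zero.mp (hz x)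
end

section
/- Let f : N × N → M be a full non-degenerate Λ-bilinear map between finitely generated modules over a Noetherian commutative ring Λ. Then the largest ring of scalars R(f) is a finitely generated Λ-module, and Z(Sym(f)), R(f), N, and M are all simultaneously zero, finite, or infinite. -/
/-!
Endomorphisms `α` of `N` for which `(x, y) ↦ f (α x) y` factors through `f` form a Λ-subalgebra,
and products of commuting self-adjoint endomorphisms are self-adjoint; hence the Λ-subalgebra
generated by `R(f)` is again a ring of scalars, and by maximality `R(f)` contains the scalars `Λ`.
A finite set of endomorphisms containing the scalars forces `N` to be finite, since `N` is then a
sum of finitely many finite orbits `Λ x`. If `N` is finite, `M` is spanned by the finite `Λ`-stable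
image of `f`; if `M` is finite, `f` embeds `N` into the finite module `Hom_Λ(N, M)`.
-/

open Submodule

theorem subsingleton_iff_forall_eq_zero {V : Type*} [Zero V] :
    Subsingleton V ↔ ∀ x : V, x = 0 :=
  ⟨fun _ x => Subsingleton.elim x 0, subsingleton_of_forall_eq 0⟩

theorem exists_finset_subset_forall_mem_span {Λ V : Type*} [Semiring Λ] [AddCommMonoid V]
    [Module Λ V] [IsNoetherian Λ V] (S : Set V) :
    ∃ s : Finset V, ↑s ⊆ S ∧ ∀ x ∈ S, x ∈ span Λ (s : Set V) := by
  obtain ⟨s, hsS, hs⟩ :=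
    (fg_span_iff_fg_span_finset_subset S).1 (IsNoetherian.noetherian (span Λ S))
  exact ⟨s, hsS, fun x hx => hs ▸ subset_span hx⟩

theorem finite_of_span_eq_top_of_smul_mem {Λ M : Type*} [Semiring Λ] [AddCommMonoid M]
    [Module Λ M] {F : Set M} (hF : F.Finite) (hsmul : ∀ c : Λ, ∀ z ∈ F, c • z ∈ F)
    (hspan : span Λ F = ⊤) : Finite M := by
  have := hF.fintype
  refine Finite.of_surjective (fun d : F → F => ∑ z, (d z : M)) fun m => ?_
  have hm : m ∈ span Λ (Set.range ((↑) : F → M)) := by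
    rw [Subtype.range_coe, hspan]
    trivial
  obtain ⟨c, rfl⟩ := (mem_span_range_iff_exists_fun Λ).1 hm
  exact ⟨fun z => ⟨c z • z, hsmul _ _ z.2⟩, rfl⟩

theorem finite_linearMap_of_finite {Λ N M : Type*} [Semiring Λ] [AddCommMonoid N] [Module Λ N]
    [AddCommMonoid M] [Module Λ M] [Module.Finite Λ N] [Finite M] : Finite (N →ₗ[Λ] M) := by
  obtain ⟨n, s, hs⟩ := Module.Finite.exists_fin (R := Λ) (M := N)
  exact Finite.of_injective (fun φ : N →ₗ[Λ] M => φ ∘ s) fun φ ψ h =>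
    LinearMap.ext_on_range hs (congrFun h)

section Endomorphisms

variable {Λ N : Type*} [CommSemiring Λ] [AddCommMonoid N] [Module Λ N]

theorem subset_zero_iff_subsingleton {S : Set (Module.End Λ N)} (hS : 1 ∈ S) :
    S ⊆ {0} ↔ Subsingleton N := by
  refine ⟨fun h => subsingleton_of_forall_eq 0 fun x => ?_, fun _ α _ => ?_⟩
  · simpa using LinearMap.congr_fun (h hS) x
  · exact LinearMap.ext fun x => Subsingleton.elim _ _

theorem finite_iff_of_algebraMap_mem [Module.Finite Λ N] {S : Set (Module.End Λ N)}
    (hS : ∀ c : Λ, algebraMap Λ (Module.End Λ N) c ∈ S) : S.Finite ↔ Finite N := by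
  refine ⟨fun hfin => ?_, fun _ => ?_⟩
  · obtain ⟨t, ht⟩ := Module.Finite.fg_top (R := Λ) (M := N)
    refine finite_of_span_eq_top_of_smul_mem (Λ := Λ)
      (F := Set.image2 (fun α x => α x) (Set.range (algebraMap Λ (Module.End Λ N))) t) ?_ ?_ ?_
    · exact (hfin.subset (Set.range_subset_iff.2 hS)).image2 _ t.finite_toSet
    · rintro c _ ⟨_, ⟨d, rfl⟩, x, hx, rfl⟩
      exact ⟨_, ⟨c * d, rfl⟩, x, hx, by simp only [Module.algebraMap_end_apply, mul_smul]⟩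
    · rw [eq_top_iff, ← ht]
      exact span_mono fun x hx => ⟨1, ⟨1, map_one _⟩, x, hx, rfl⟩
  · have : Finite (Module.End Λ N) := Finite.of_injective _ DFunLike.coe_injective
    exact S.toFinite

end Endomorphisms

section BilinearMap

variable {Λ N M : Type*} [CommRing Λ] [AddCommGroup N] [Module Λ N] [AddCommGroup M] [Module Λ M]
  {f : N →ₗ[Λ] N →ₗ[Λ] M}

theorem subsingleton_iff_of_span_eq_top (hfull : span Λ {z : M | ∃ x y : N, f x y = z} = ⊤)
    (hinj : Function.Injective f) : Subsingleton N ↔ Subsingleton M := by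
  refine ⟨fun _ => ?_, fun _ => hinj.subsingleton⟩
  rw [← Submodule.subsingleton_iff Λ, ← subsingleton_iff_bot_eq_top, ← hfull, eq_comm, span_eq_bot]
  rintro _ ⟨x, y, rfl⟩
  rw [Subsingleton.elim x 0, map_zero, LinearMap.zero_apply]

theorem finite_iff_of_span_eq_top [Module.Finite Λ N]
    (hfull : span Λ {z : M | ∃ x y : N, f x y = z} = ⊤) (hinj : Function.Injective f) :
    Finite N ↔ Finite M := by
  refine ⟨fun _ => finite_of_span_eq_top_of_smul_mem ?_ ?_ hfull, fun _ => ?_⟩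
  · refine (Set.finite_range fun p : N × N => f p.1 p.2).subset ?_
    rintro _ ⟨x, y, rfl⟩
    exact ⟨(x, y), rfl⟩
  · rintro c _ ⟨x, y, rfl⟩
    exact ⟨c • x, y, by rw [map_smul, LinearMap.smul_apply]⟩
  · have : Finite (N →ₗ[Λ] M) := finite_linearMap_of_finite
    exact Finite.of_injective f hinj

variable (f) in
def inducingSubalgebra : Subalgebra Λ (Module.End Λ N) where
  carrier := {α | ∃ G : Module.End Λ M, ∀ x y, G (f x y) = f (α x) y}
  mul_mem' := by
    rintro α β ⟨G, hG⟩ ⟨H, hH⟩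
    exact ⟨G * H, fun x y => by simp [hG, hH]⟩
  add_mem' := by
    rintro α β ⟨G, hG⟩ ⟨H, hH⟩
    exact ⟨G + H, fun x y => by simp [hG, hH]⟩
  algebraMap_mem' c := ⟨algebraMap Λ _ c, fun x y => by simp⟩

theorem eq_of_forall_apply_eq_of_span_eq_top (hfull : span Λ {z : M | ∃ x y : N, f x y = z} = ⊤)
    {G H : Module.End Λ M} (h : ∀ x y, G (f x y) = H (f x y)) : G = H :=
  LinearMap.ext_on hfull (by rintro _ ⟨x, y, rfl⟩; exact h x y)

variable (f) in
noncomputable def inducedEnd (α : inducingSubalgebra f) : Module.End Λ M := α.2.choose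

theorem inducedEnd_apply (α : inducingSubalgebra f) (x y : N) :
    inducedEnd f α (f x y) = f ((α : Module.End Λ N) x) y :=
  α.2.choose_spec x y

noncomputable def inducedHom (hfull : span Λ {z : M | ∃ x y : N, f x y = z} = ⊤) :
    inducingSubalgebra f →+* Module.End Λ M where
  toFun := inducedEnd f
  map_one' := eq_of_forall_apply_eq_of_span_eq_top hfull fun x y => by simp [inducedEnd_apply]
  map_mul' α β := eq_of_forall_apply_eq_of_span_eq_top hfull fun x y => by simp [inducedEnd_apply]
  map_zero' := eq_of_forall_apply_eq_of_span_eq_top hfull fun x y => by simp [inducedEnd_apply]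
  map_add' α β := eq_of_forall_apply_eq_of_span_eq_top hfull fun x y => by simp [inducedEnd_apply]

theorem inducedHom_injective (hfull : span Λ {z : M | ∃ x y : N, f x y = z} = ⊤)
    (hinj : Function.Injective f) : Function.Injective (inducedHom hfull) := by
  intro α β h
  refine Subtype.ext (LinearMap.ext fun x => hinj (LinearMap.ext fun y => ?_))
  rw [← inducedEnd_apply, ← inducedEnd_apply]
  exact LinearMap.congr_fun h (f x y)

namespace IsRingOfScalars

variable {Δ : Subring (Module.End Λ N)}

theorem of_le (hfull : span Λ {z : M | ∃ x y : N, f x y = z} = ⊤) (hinj : Function.Injective f)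
    (hcomm : ∀ α ∈ Δ, ∀ β ∈ Δ, α * β = β * α) (hsa : ∀ α ∈ Δ, f.IsSelfAdjoint α)
    (hle : Δ ≤ (inducingSubalgebra f).toSubring) : IsRingOfScalars f Δ :=
  ⟨fun α β => Subtype.ext (hcomm _ α.2 _ β.2),
    (inducedHom hfull).comp (Subring.inclusion hle),
    (inducedHom_injective hfull hinj).comp (Subring.inclusion_injective hle),
    fun α x y => ⟨hsa α α.2 x y, (inducedEnd_apply (Subring.inclusion hle α) x y).symm⟩⟩

theorem le_inducingSubalgebra (h : IsRingOfScalars f Δ) : Δ ≤ (inducingSubalgebra f).toSubring :=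
  fun α hα =>
    let ⟨_, g, _, hg⟩ := h
    ⟨g ⟨α, hα⟩, fun x y => (hg ⟨α, hα⟩ x y).2.symm⟩

theorem isSelfAdjoint (h : IsRingOfScalars f Δ) {α : Module.End Λ N} (hα : α ∈ Δ) :
    f.IsSelfAdjoint α :=
  fun x y => (h.2.choose_spec.2 ⟨α, hα⟩ x y).1

theorem adjoin (hfull : span Λ {z : M | ∃ x y : N, f x y = z} = ⊤) (hinj : Function.Injective f)
    (h : IsRingOfScalars f Δ) : IsRingOfScalars f (Algebra.adjoin Λ (Δ : Set _)).toSubring := by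
  have hcomm : ∀ α ∈ Algebra.adjoin Λ (Δ : Set _), ∀ β ∈ Algebra.adjoin Λ (Δ : Set _),
      Commute α β := fun α hα β hβ =>
    Algebra.commute_of_mem_adjoin_of_forall_mem_commute hβ fun γ hγ =>
      (Algebra.commute_of_mem_adjoin_of_forall_mem_commute hα fun δ hδ =>
        congrArg Subtype.val (h.1 ⟨γ, hγ⟩ ⟨δ, hδ⟩)).symm
  refine .of_le hfull hinj (fun α hα β hβ => (hcomm α hα β hβ).eq) (fun α hα => ?_)
    (fun α hα => Algebra.adjoin_le (fun β hβ => h.le_inducingSubalgebra hβ) hα)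
  induction hα using Algebra.adjoin_induction with
  | mem α hα => exact h.isSelfAdjoint hα
  | algebraMap c => exact fun x y => by simp
  | add α β _ _ hα hβ => exact hα.add hβ
  | mul α β hα' hβ' hα hβ =>
    have := hα.mul hβ
    rwa [← (hcomm α hα' β hβ').eq] at this

theorem algebraMap_mem (hfull : span Λ {z : M | ∃ x y : N, f x y = z} = ⊤)
    (hinj : Function.Injective f) {R : Subring (Module.End Λ N)} (hR : IsRingOfScalars f R)
    (hmax : ∀ Δ : Subring (Module.End Λ N), IsRingOfScalars f Δ → Δ ≤ R) (c : Λ) :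
    algebraMap Λ (Module.End Λ N) c ∈ R :=
  hmax _ (hR.adjoin hfull hinj) (Subalgebra.algebraMap_mem _ c)

end IsRingOfScalars

end BilinearMap

theorem stmt6_general {Λ N M : Type*} [CommRing Λ] [IsNoetherianRing Λ]
    [AddCommGroup N] [Module Λ N] [Module.Finite Λ N]
    [AddCommGroup M] [Module Λ M]
    (f : N →ₗ[Λ] N →ₗ[Λ] M)
    (hfull : Submodule.span Λ {z : M | ∃ x y : N, f x y = z} = ⊤)
    (hndl : ∀ a : N, (∀ x : N, f a x = 0) → a = 0)
    (Sym Z : Set (Module.End Λ N))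
    (hSym : Sym = {α | ∀ x y : N, f (α x) y = f x (α y)})
    (hZ : Z = {α | α ∈ Sym ∧ ∀ β ∈ Sym, α * β = β * α})
    (R : Subring (Module.End Λ N))
    (hR : IsRingOfScalars f R)
    (hmax : ∀ Δ : Subring (Module.End Λ N), IsRingOfScalars f Δ → Δ ≤ R) :
    (∃ s : Finset (Module.End Λ N), (↑s : Set (Module.End Λ N)) ⊆ (R : Set (Module.End Λ N)) ∧
      ∀ x ∈ R, x ∈ Submodule.span Λ (↑s : Set (Module.End Λ N))) ∧
    (((R : Set (Module.End Λ N)) ⊆ {0}) ↔ ∀ x : N, x = 0) ∧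
    ((Z ⊆ {0}) ↔ ∀ x : N, x = 0) ∧
    ((∀ x : N, x = 0) ↔ ∀ x : M, x = 0) ∧
    ((R : Set (Module.End Λ N)).Finite ↔ (Set.univ : Set N).Finite) ∧
    (Z.Finite ↔ (Set.univ : Set N).Finite) ∧
    ((Set.univ : Set N).Finite ↔ (Set.univ : Set M).Finite) := by
  subst hSym
  have hinj : Function.Injective f := (injective_iff_map_eq_zero f).2 fun a ha =>
    hndl a fun x => by rw [ha, LinearMap.zero_apply]
  have hZ_scalars : ∀ c : Λ, algebraMap Λ (Module.End Λ N) c ∈ Z := fun c =>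
    hZ ▸ ⟨fun x y => by simp, fun β _ => Algebra.commutes c β⟩
  have hZ_one : 1 ∈ Z := map_one (algebraMap Λ (Module.End Λ N)) ▸ hZ_scalars 1
  simp only [← subsingleton_iff_forall_eq_zero, Set.finite_univ_iff]
  exact ⟨exists_finset_subset_forall_mem_span _, subset_zero_iff_subsingleton R.one_mem,
    subset_zero_iff_subsingleton hZ_one, subsingleton_iff_of_span_eq_top hfull hinj,
    finite_iff_of_algebraMap_mem (hR.algebraMap_mem hfull hinj hmax),
    finite_iff_of_algebraMap_mem hZ_scalars, finite_iff_of_span_eq_top hfull hinj⟩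

/-- for a full non-degenerate Λ-bilinear map between finitely
generated modules over a Noetherian commutative ring, the largest ring of
scalars `R(f)` is a finitely generated Λ-module, and `Z(Sym f)`, `R(f)`, `N`
and `M` are all simultaneously zero, finite, or infinite. -/
theorem stmt6 {Λ N M : Type*} [CommRing Λ] [IsNoetherianRing Λ]
    [AddCommGroup N] [Module Λ N] [Module.Finite Λ N]
    [AddCommGroup M] [Module Λ M] [Module.Finite Λ M]
    (f : N →ₗ[Λ] N →ₗ[Λ] M)
    (hfull : Submodule.span Λ {z : M | ∃ x y : N, f x y = z} = ⊤)
    (hndl : ∀ a : N, (∀ x : N, f a x = 0) → a = 0)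
    (hndr : ∀ a : N, (∀ x : N, f x a = 0) → a = 0)
    (Sym Z : Set (Module.End Λ N))
    (hSym : Sym = {α | ∀ x y : N, f (α x) y = f x (α y)})
    (hZ : Z = {α | α ∈ Sym ∧ ∀ β ∈ Sym, α * β = β * α})
    (R : Subring (Module.End Λ N))
    (hR : IsRingOfScalars f R)
    (hmax : ∀ Δ : Subring (Module.End Λ N), IsRingOfScalars f Δ → Δ ≤ R) :
    (∃ s : Finset (Module.End Λ N), (↑s : Set (Module.End Λ N)) ⊆ (R : Set (Module.End Λ N)) ∧
      ∀ x ∈ R, x ∈ Submodule.span Λ (↑s : Set (Module.End Λ N))) ∧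
    (((R : Set (Module.End Λ N)) ⊆ {0}) ↔ ∀ x : N, x = 0) ∧
    ((Z ⊆ {0}) ↔ ∀ x : N, x = 0) ∧
    ((∀ x : N, x = 0) ↔ ∀ x : M, x = 0) ∧
    ((R : Set (Module.End Λ N)).Finite ↔ (Set.univ : Set N).Finite) ∧
    (Z.Finite ↔ (Set.univ : Set N).Finite) ∧
    ((Set.univ : Set N).Finite ↔ (Set.univ : Set M).Finite) :=
  stmt6_general f hfull hndl Sym Z hSym hZ R hR hmax
end

section
/- Let R be a (possibly non-associative, non-commutative, non-unitary) ring whose underlying additive group is finitely generated, and suppose R² (the additive subgroup generated by all products xy) is finite. Let Ann_l = {a ∈ R : aR = 0} and Ann_r = {b ∈ R : Rb = 0}. Then Ann_l and Ann_r have finite index in the additive group of R. -/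
lemma stmt18_aux {R : Type*} [AddCommGroup R] (B : R →ₗ[ℤ] R →ₗ[ℤ] R)
    (hfg : Module.Finite ℤ R) (N : Set R) (hN : N.Finite)
    (hB : ∀ x y : R, B x y ∈ N) (A : Submodule ℤ R)
    (hA : ∀ a : R, a ∈ A ↔ ∀ y : R, B a y = 0) : Finite (R ⧸ A) := by
  obtain ⟨S, hS⟩ := Module.Finite.fg_top (R := ℤ) (M := R)
  let φ : R →ₗ[ℤ] (S → R) := LinearMap.pi (fun s => B.flip s)
  have hker : LinearMap.ker φ = A := by
    ext a
    simp only [LinearMap.mem_ker, hA, φ, LinearMap.pi_apply, LinearMap.flip_apply, funext_iff,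
      Pi.zero_apply]
    constructor
    · intro h y
      have hsub : (S : Set R) ⊆ (LinearMap.ker (B a) : Set R) := by
        intro s hs; exact h ⟨s, hs⟩
      have : (⊤ : Submodule ℤ R) ≤ LinearMap.ker (B a) := by
        rw [← hS]; exact Submodule.span_le.mpr hsub
      exact this (Submodule.mem_top)
    · intro h s; exact h s
  have hrange : Finite (LinearMap.range φ) := by
    have : (LinearMap.range φ : Set (S → R)) ⊆ Set.pi Set.univ (fun _ => N) := by
      rintro f ⟨a, rfl⟩ s _
      exact hB a s
    exact ((Set.Finite.pi (fun _ => hN)).subset this).to_subtype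
  have := Finite.of_equiv (LinearMap.range φ) φ.quotKerEquivRange.symm.toEquiv
  rwa [hker] at this

/-- let `R` be a (possibly non-associative) ring whose additive
group is finitely generated and whose multiplication is the ℤ-bilinear map
`mul`. If `R²` (the subgroup generated by all products) is finite, then the
left and right annihilators have finite index in the additive group of `R`. -/
theorem stmt18 {R : Type*} [AddCommGroup R]
    (mul : R →ₗ[ℤ] R →ₗ[ℤ] R)
    (hfg : AddGroup.FG R)
    (hsq : ((Submodule.span ℤ {z : R | ∃ x y, mul x y = z} : Submodule ℤ R) : Set R).Finite)
    (Al Ar : Submodule ℤ R)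
    (hAl : ∀ a : R, a ∈ Al ↔ ∀ y : R, mul a y = 0)
    (hAr : ∀ b : R, b ∈ Ar ↔ ∀ x : R, mul x b = 0) :
    Finite (R ⧸ Al) ∧ Finite (R ⧸ Ar) := by
  have hmf : Module.Finite ℤ R := Module.Finite.iff_addGroup_fg.mpr hfg
  refine ⟨stmt18_aux mul hmf _ hsq (fun x y => Submodule.subset_span ⟨x, y, rfl⟩) Al hAl,
    stmt18_aux mul.flip hmf _ hsq (fun x y => Submodule.subset_span ⟨y, x, rfl⟩) Ar ?_⟩
  intro b
  simpa using hAr b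
end
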